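/- Fix n ≥ 3, 2 ≤ i ≤ n−1, parameters ε ∈ (0,1), δ > 0, c > 0, and suppose α ≥ 0, β ≥ 0 satisfy the feasibility conditions (i) α ≤ c + 2(−1+ε)β, (ii) (−1+ε)α + c ≤ β, (iii) α ≥ c/(1+δ). Let Δ := δ + 4ε − 2ε², m := cε/Δ, n₀ := c(δ+2ε)/Δ, and let x† be the saddle of cell C_{{i−1,i,i+1}}, i.e. x†_{i−1} = x†_{i+1} = m, x†_i = n₀, x†_k = 0 otherwise. Then: (a) n₀ > c/(2−ε) and m < c/(2−ε); (b) y_i(x†) = n₀ ≥ α, y_{i−1}(x†) = y_{i+1}(x†) = m ≤ β, and y_k(x†) ≤ 0 for all k ∉ {i−1,i,i+1}, where y(x) = Wx + c·1. Hence x† ∈ R_FI^{(i)} := {x : y_i(x) ≥ α, y_{i±1}(x) ≤ β, y_k(x) ≤ 0 for all k ∉ {i−1,i,i+1}}. -/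

import Mathlib

/-!
On its support the saddle solves the equilibrium equations `n₀ = 2(-1 + ε)m + c` and
`m = (-1 + ε)n₀ + (-1 - δ)m + c`, so there `y = x†`. Off the support the centre column of `W`
contributes `-1 - δ` and the two others at most `-1 + ε`, whence
`y_k ≤ 2(-1 + ε)m - (1 + δ)n₀ + c = -δ n₀ < 0`. Feeding (ii) into (i) and adding `α ≤ c`
(from (i) and `β ≥ 0`) gives `(2 - ε)α ≤ c`, hence `α ≤ c/(2 - ε) ≤ β`; the threshold
`c/(2 - ε)` separates `m` from `n₀`, which yields both (a) and (b).
-/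

open Matrix

def IsChainMatrix {n : ℕ} (ε δ : ℝ) (W : Matrix (Fin n) (Fin n) ℝ) : Prop :=
  ∀ k l : Fin n, W k l =
    if (k : ℕ) = (l : ℕ) then 0
    else if ((k : ℤ) - (l : ℤ)).natAbs = 1 then -1 + ε else -1 - δ

namespace IsChainMatrix

variable {n : ℕ} {ε δ : ℝ} {W : Matrix (Fin n) (Fin n) ℝ}

theorem apply_self (hW : IsChainMatrix ε δ W) (k : Fin n) : W k k = 0 := by
  simp [hW k k]

theorem apply_of_natAbs_eq_one (hW : IsChainMatrix ε δ W) {k l : Fin n}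
    (h : ((k : ℤ) - (l : ℤ)).natAbs = 1) : W k l = -1 + ε := by
  rw [hW, if_neg (by omega), if_pos h]

theorem apply_of_two_le_natAbs (hW : IsChainMatrix ε δ W) {k l : Fin n}
    (h : 2 ≤ ((k : ℤ) - (l : ℤ)).natAbs) : W k l = -1 - δ := by
  rw [hW, if_neg (by omega), if_neg (by omega)]

theorem apply_le_of_ne (hW : IsChainMatrix ε δ W) (hε : 0 ≤ ε) (hδ : 0 ≤ δ) {k l : Fin n}
    (h : k ≠ l) : W k l ≤ -1 + ε := by
  rw [hW, if_neg (Fin.val_ne_of_ne h)]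
  split_ifs <;> linarith

end IsChainMatrix

def tripleSupport {n : ℕ} (i : ℕ) (p q : ℝ) (k : Fin n) : ℝ :=
  if (k : ℕ) = i - 1 ∨ (k : ℕ) = i + 1 then p else if (k : ℕ) = i then q else 0

theorem tripleSupport_eq_single {n i : ℕ} (hi1 : 1 ≤ i) (hi2 : i + 1 < n) (p q : ℝ) :
    tripleSupport (n := n) i p q =
      Pi.single ⟨i - 1, Nat.sub_lt_of_lt (Nat.lt_of_succ_lt hi2)⟩ p +
        Pi.single ⟨i, Nat.lt_of_succ_lt hi2⟩ q + Pi.single ⟨i + 1, hi2⟩ p := by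
  funext k
  simp only [tripleSupport, Pi.add_apply, Pi.single_apply, Fin.ext_iff]
  split_ifs <;> first | omega | simp

theorem mulVec_tripleSupport {n i : ℕ} (hi1 : 1 ≤ i) (hi2 : i + 1 < n)
    (M : Matrix (Fin n) (Fin n) ℝ) (p q : ℝ) (k : Fin n) :
    (M *ᵥ tripleSupport i p q) k =
      M k ⟨i - 1, Nat.sub_lt_of_lt (Nat.lt_of_succ_lt hi2)⟩ * p +
        M k ⟨i, Nat.lt_of_succ_lt hi2⟩ * q + M k ⟨i + 1, hi2⟩ * p := by
  simp only [tripleSupport_eq_single hi1 hi2, mulVec_add, mulVec_single, op_smul_eq_smul,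
    Pi.add_apply, Pi.smul_apply, col_apply, smul_eq_mul]
  ring

namespace IsChainMatrix

variable {n i : ℕ} {ε δ : ℝ} {W : Matrix (Fin n) (Fin n) ℝ}

theorem mulVec_tripleSupport_center (hW : IsChainMatrix ε δ W) (hi1 : 1 ≤ i) (hi2 : i + 1 < n)
    (p q : ℝ) : (W *ᵥ tripleSupport i p q) ⟨i, Nat.lt_of_succ_lt hi2⟩ = 2 * (-1 + ε) * p := by
  rw [mulVec_tripleSupport hi1 hi2, hW.apply_self,
    hW.apply_of_natAbs_eq_one (by dsimp only; omega),
    hW.apply_of_natAbs_eq_one (by dsimp only; omega)]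
  ring

theorem mulVec_tripleSupport_left (hW : IsChainMatrix ε δ W) (hi1 : 1 ≤ i) (hi2 : i + 1 < n)
    (p q : ℝ) :
    (W *ᵥ tripleSupport i p q) ⟨i - 1, Nat.sub_lt_of_lt (Nat.lt_of_succ_lt hi2)⟩ =
      (-1 + ε) * q + (-1 - δ) * p := by
  rw [mulVec_tripleSupport hi1 hi2, hW.apply_self,
    hW.apply_of_natAbs_eq_one (by dsimp only; omega),
    hW.apply_of_two_le_natAbs (by dsimp only; omega)]
  ring

theorem mulVec_tripleSupport_right (hW : IsChainMatrix ε δ W) (hi1 : 1 ≤ i) (hi2 : i + 1 < n)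
    (p q : ℝ) :
    (W *ᵥ tripleSupport i p q) ⟨i + 1, hi2⟩ = (-1 + ε) * q + (-1 - δ) * p := by
  rw [mulVec_tripleSupport hi1 hi2, hW.apply_self,
    hW.apply_of_two_le_natAbs (by dsimp only; omega),
    hW.apply_of_natAbs_eq_one (by dsimp only; omega)]
  ring

theorem mulVec_tripleSupport_le_of_far (hW : IsChainMatrix ε δ W) (hε : 0 ≤ ε) (hδ : 0 ≤ δ)
    (hi1 : 1 ≤ i) (hi2 : i + 1 < n) {p : ℝ} (hp : 0 ≤ p) (q : ℝ) {k : Fin n}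
    (hk1 : (k : ℕ) ≠ i - 1) (hki : (k : ℕ) ≠ i) (hk2 : (k : ℕ) ≠ i + 1) :
    (W *ᵥ tripleSupport i p q) k ≤ 2 * (-1 + ε) * p + (-1 - δ) * q := by
  have hleft : W k ⟨i - 1, Nat.sub_lt_of_lt (Nat.lt_of_succ_lt hi2)⟩ ≤ -1 + ε :=
    hW.apply_le_of_ne hε hδ (by simp [Fin.ext_iff, hk1])
  have hright : W k ⟨i + 1, hi2⟩ ≤ -1 + ε :=
    hW.apply_le_of_ne hε hδ (by simp [Fin.ext_iff, hk2])
  have hcenter : W k ⟨i, Nat.lt_of_succ_lt hi2⟩ = -1 - δ :=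
    hW.apply_of_two_le_natAbs (by dsimp only; omega)
  rw [mulVec_tripleSupport hi1 hi2, hcenter]
  linarith [mul_le_mul_of_nonneg_right hleft hp, mul_le_mul_of_nonneg_right hright hp]

end IsChainMatrix

def saddleDenom (ε δ : ℝ) : ℝ := δ + 4 * ε - 2 * ε ^ 2

noncomputable def saddleSide (ε δ c : ℝ) : ℝ := c * ε / saddleDenom ε δ

noncomputable def saddleCenter (ε δ c : ℝ) : ℝ := c * (δ + 2 * ε) / saddleDenom ε δ

section Saddle

variable {ε δ c : ℝ}

theorem saddleDenom_pos (hε : 0 < ε) (hε2 : ε < 2) (hδ : 0 ≤ δ) : 0 < saddleDenom ε δ := by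
  unfold saddleDenom; nlinarith

theorem saddleSide_pos (hε : 0 < ε) (hε2 : ε < 2) (hδ : 0 ≤ δ) (hc : 0 < c) :
    0 < saddleSide ε δ c :=
  div_pos (by positivity) (saddleDenom_pos hε hε2 hδ)

theorem saddleCenter_pos (hε : 0 < ε) (hε2 : ε < 2) (hδ : 0 ≤ δ) (hc : 0 < c) :
    0 < saddleCenter ε δ c :=
  div_pos (by positivity) (saddleDenom_pos hε hε2 hδ)

theorem saddleCenter_eq (hΔ : saddleDenom ε δ ≠ 0) :
    saddleCenter ε δ c = 2 * (-1 + ε) * saddleSide ε δ c + c := by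
  unfold saddleCenter saddleSide
  field_simp
  unfold saddleDenom
  ring

theorem saddleSide_eq (hΔ : saddleDenom ε δ ≠ 0) :
    saddleSide ε δ c = (-1 + ε) * saddleCenter ε δ c + (-1 - δ) * saddleSide ε δ c + c := by
  unfold saddleCenter saddleSide
  field_simp
  unfold saddleDenom
  ring

theorem div_two_sub_lt_saddleCenter (hε : 0 < ε) (hε1 : ε < 1) (hδ : 0 < δ) (hc : 0 < c) :
    c / (2 - ε) < saddleCenter ε δ c := by
  rw [saddleCenter, div_lt_div_iff₀ (by linarith) (saddleDenom_pos hε (by linarith) hδ.le),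
    saddleDenom]
  nlinarith [mul_pos (mul_pos hc hδ) (sub_pos.mpr hε1)]

theorem saddleSide_lt_div_two_sub (hε : 0 < ε) (hε2 : ε < 2) (hδ : 0 ≤ δ) (hc : 0 < c) :
    saddleSide ε δ c < c / (2 - ε) := by
  rw [saddleSide, div_lt_div_iff₀ (saddleDenom_pos hε hε2 hδ) (by linarith), saddleDenom]
  nlinarith [mul_pos (mul_pos hc hε) (sub_pos.mpr hε2)]

end Saddle

section Feasible

variable {ε c α β : ℝ}

theorem two_sub_mul_le_of_feasible (hε : 0 < ε) (hε1 : ε ≤ 1) (hβ : 0 ≤ β)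
    (h1 : α ≤ c + 2 * (-1 + ε) * β) (h2 : (-1 + ε) * α + c ≤ β) : (2 - ε) * α ≤ c := by
  have hαc : α ≤ c := by nlinarith
  have hchain : α ≤ c + 2 * (-1 + ε) * ((-1 + ε) * α + c) := by
    nlinarith [mul_le_mul_of_nonneg_left h2 (by linarith : 0 ≤ 2 * (1 - ε))]
  -- `2ε((2 - ε)α - c) = (α - c) + (α - c - 2(-1 + ε)((-1 + ε)α + c))`
  have hε_mul : ε * ((2 - ε) * α) ≤ ε * c := by linarith
  exact le_of_mul_le_mul_left hε_mul hε

theorem le_div_two_sub_of_feasible (hε : 0 < ε) (hε1 : ε ≤ 1) (hβ : 0 ≤ β)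
    (h1 : α ≤ c + 2 * (-1 + ε) * β) (h2 : (-1 + ε) * α + c ≤ β) : α ≤ c / (2 - ε) := by
  rw [le_div_iff₀ (by linarith)]
  linarith [two_sub_mul_le_of_feasible hε hε1 hβ h1 h2]

theorem div_two_sub_le_of_feasible (hε : 0 < ε) (hε1 : ε ≤ 1) (hβ : 0 ≤ β)
    (h1 : α ≤ c + 2 * (-1 + ε) * β) (h2 : (-1 + ε) * α + c ≤ β) : c / (2 - ε) ≤ β := by
  rw [div_le_iff₀ (by linarith)]
  nlinarith [mul_le_mul_of_nonneg_left (two_sub_mul_le_of_feasible hε hε1 hβ h1 h2)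
    (by linarith : 0 ≤ 1 - ε), mul_le_mul_of_nonneg_left h2 (by linarith : 0 ≤ 2 - ε)]

end Feasible

/-- Under the feasibility conditions, the saddle point of the
triple-support cell `C_{i−1,i,i+1}` belongs to the forward-invariant set
`R_FI^{(i)}`; moreover `n₀ > c/(2−ε)` and `m < c/(2−ε)`. Indices are 0-based:
`1 ≤ i` and `i + 1 < n` correspond to the 1-based statement `2 ≤ i ≤ n−1`. -/
theorem cstln_saddle_in_forward_invariant_set (n i : ℕ)
    (hi1 : 1 ≤ i) (hi2 : i + 1 < n)
    (ε δ c : ℝ) (hε : 0 < ε) (hε1 : ε < 1) (hδ : 0 < δ) (hc : 0 < c)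
    (W : Matrix (Fin n) (Fin n) ℝ)
    (hW : ∀ k l : Fin n, W k l =
      if (k : ℕ) = (l : ℕ) then 0
      else if ((k : ℤ) - (l : ℤ)).natAbs = 1 then -1 + ε else -1 - δ)
    (α β : ℝ) (hβ : 0 ≤ β)
    (h1 : α ≤ c + 2 * (-1 + ε) * β)
    (h2 : (-1 + ε) * α + c ≤ β)
    (Δ m n₀ : ℝ) (hΔ : Δ = δ + 4 * ε - 2 * ε ^ 2)
    (hm : m = c * ε / Δ) (hn₀ : n₀ = c * (δ + 2 * ε) / Δ)
    (xd : Fin n → ℝ)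
    (hxd : ∀ k : Fin n, xd k =
      if (k : ℕ) = i - 1 ∨ (k : ℕ) = i + 1 then m
      else if (k : ℕ) = i then n₀ else 0)
    (y : Fin n → ℝ) (hy : ∀ k, y k = W.mulVec xd k + c) :
    -- (a)
    (c / (2 - ε) < n₀ ∧ m < c / (2 - ε)) ∧
    -- (b)
    (y ⟨i, by omega⟩ = n₀ ∧ α ≤ y ⟨i, by omega⟩ ∧
     y ⟨i - 1, by omega⟩ = m ∧ y ⟨i - 1, by omega⟩ ≤ β ∧
     y ⟨i + 1, by omega⟩ = m ∧ y ⟨i + 1, by omega⟩ ≤ β ∧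
     ∀ k : Fin n, (k : ℕ) ≠ i - 1 → (k : ℕ) ≠ i → (k : ℕ) ≠ i + 1 → y k ≤ 0) := by
  replace hW : IsChainMatrix ε δ W := hW
  obtain rfl : Δ = saddleDenom ε δ := hΔ
  obtain rfl : m = saddleSide ε δ c := hm
  obtain rfl : n₀ = saddleCenter ε δ c := hn₀
  obtain rfl : xd = tripleSupport i (saddleSide ε δ c) (saddleCenter ε δ c) := funext hxd
  have hΔ0 := (saddleDenom_pos hε (by linarith) hδ.le).ne'
  have hα := le_div_two_sub_of_feasible hε hε1.le hβ h1 h2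
  have hβ' := div_two_sub_le_of_feasible hε hε1.le hβ h1 h2
  have hn₀_gt := div_two_sub_lt_saddleCenter hε hε1 hδ hc
  have hm_lt := saddleSide_lt_div_two_sub (c := c) hε (by linarith) hδ.le hc
  have hy_center : y ⟨i, by omega⟩ = saddleCenter ε δ c := by
    rw [hy, hW.mulVec_tripleSupport_center hi1 hi2, saddleCenter_eq hΔ0]
  have hy_left : y ⟨i - 1, by omega⟩ = saddleSide ε δ c := by
    rw [hy, hW.mulVec_tripleSupport_left hi1 hi2, ← saddleSide_eq hΔ0]
  have hy_right : y ⟨i + 1, by omega⟩ = saddleSide ε δ c := by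
    rw [hy, hW.mulVec_tripleSupport_right hi1 hi2, ← saddleSide_eq hΔ0]
  refine ⟨⟨hn₀_gt, hm_lt⟩, hy_center, by linarith, hy_left, by linarith, hy_right, by linarith,
    fun k hk1 hki hk2 => ?_⟩
  have hfar := hW.mulVec_tripleSupport_le_of_far hε.le hδ.le hi1 hi2
    (saddleSide_pos hε (by linarith) hδ.le hc).le (saddleCenter ε δ c) hk1 hki hk2
  calc y k ≤ 2 * (-1 + ε) * saddleSide ε δ c + (-1 - δ) * saddleCenter ε δ c + c := by
        rw [hy]; linarith
    _ = -δ * saddleCenter ε δ c := by linear_combination -saddleCenter_eq (c := c) hΔ0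
    _ ≤ 0 := mul_nonpos_of_nonpos_of_nonneg (by linarith)
        (saddleCenter_pos hε (by linarith) hδ.le hc).le
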